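/- Let n ≥ 2 be an integer and 0 < s < 1/n². Define h_s : [0,∞) → ℝ by h_s(r) = K_{r,s}(1,0) = 4((1+r)² + ns(1+r−nr))/(1+r+ns)². Then for r ∈ (0,∞), h_s′(r) = 0 if and only if r = r₀ := (n−1)(1+ns)/(1+n); moreover h_s(r₀) = (4 − s(n−1)²)/(1+ns), h_s(0) = 4/(1+ns), and lim_{r→∞} h_s(r) = 4, with 4 > 4/(1+ns) > (4 − s(n−1)²)/(1+ns). -/

import Mathlib

/-- `h_s(r) = K_{r,s}(1,0) = 4((1+r)² + ns(1+r−nr))/(1+r+ns)²`. -/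
noncomputable def hHor (n : ℕ) (s r : ℝ) : ℝ :=
  4 * ((1 + r) ^ 2 + (n : ℝ) * s * (1 + r - (n : ℝ) * r)) / (1 + r + (n : ℝ) * s) ^ 2

lemma hHor_hasDerivAt (n : ℕ) (s r : ℝ) (hD : (0:ℝ) < 1 + r + (n : ℝ) * s) :
    HasDerivAt (fun t : ℝ => hHor n s t)
      ((4 * (2 * (1 + r) + (n : ℝ) * s * (1 - (n : ℝ))) * (1 + r + (n : ℝ) * s) ^ 2 -
        4 * ((1 + r) ^ 2 + (n : ℝ) * s * (1 + r - (n : ℝ) * r)) * (2 * (1 + r + (n : ℝ) * s)))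
        / ((1 + r + (n : ℝ) * s) ^ 2) ^ 2) r := by
  set c : ℝ := (n : ℝ) * s with hc
  have hid : HasDerivAt (fun t : ℝ => t) 1 r := hasDerivAt_id r
  have hA : HasDerivAt (fun t : ℝ => 1 + t) 1 r := hid.const_add 1
  have hA2 : HasDerivAt (fun t : ℝ => (1 + t) ^ 2) (2 * (1 + r)) r := by
    simpa using hA.fun_pow 2
  have hB : HasDerivAt (fun t : ℝ => c * (1 + t - (n : ℝ) * t)) (c * (1 - (n : ℝ))) r := by
    have h1 : HasDerivAt (fun t : ℝ => (n : ℝ) * t) ((n : ℝ) * 1) r := hid.const_mul _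
    have := ((hA.sub h1).const_mul c)
    simpa using this
  have hN : HasDerivAt (fun t : ℝ => 4 * ((1 + t) ^ 2 + c * (1 + t - (n : ℝ) * t)))
      (4 * (2 * (1 + r) + c * (1 - (n : ℝ)))) r := (hA2.add hB).const_mul 4
  have hDen : HasDerivAt (fun t : ℝ => (1 + t + c) ^ 2) (2 * (1 + r + c)) r := by
    have h1 : HasDerivAt (fun t : ℝ => 1 + t + c) 1 r := hA.add_const c
    simpa using h1.fun_pow 2
  have hne : (1 + r + c) ^ 2 ≠ 0 := by positivity
  have := hN.div hDen hne
  have heq : (fun t : ℝ => hHor n s t) =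
      fun t : ℝ => 4 * ((1 + t) ^ 2 + c * (1 + t - (n : ℝ) * t)) / (1 + t + c) ^ 2 := rfl
  rw [heq]
  exact this

/-- For `n ≥ 2` and `0 < s < 1/n²`, the derivative of `h_s` vanishes on `(0,∞)` exactly at
`r₀ = (n−1)(1+ns)/(1+n)`; moreover `h_s(r₀) = (4 − s(n−1)²)/(1+ns)`, `h_s(0) = 4/(1+ns)`,
`lim_{r→∞} h_s(r) = 4`, and `4 > 4/(1+ns) > (4 − s(n−1)²)/(1+ns)`. -/
theorem stmt_8 (n : ℕ) (hn : 2 ≤ n) (s : ℝ) (hs0 : 0 < s) (hs1 : s < 1 / (n : ℝ) ^ 2) :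
    (∀ r : ℝ, 0 < r →
      (deriv (fun t : ℝ => hHor n s t) r = 0 ↔
        r = ((n : ℝ) - 1) * (1 + (n : ℝ) * s) / (1 + (n : ℝ)))) ∧
    hHor n s (((n : ℝ) - 1) * (1 + (n : ℝ) * s) / (1 + (n : ℝ)))
      = (4 - s * ((n : ℝ) - 1) ^ 2) / (1 + (n : ℝ) * s) ∧
    hHor n s 0 = 4 / (1 + (n : ℝ) * s) ∧
    Filter.Tendsto (fun r : ℝ => hHor n s r) Filter.atTop (nhds 4) ∧
    4 / (1 + (n : ℝ) * s) < 4 ∧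
    (4 - s * ((n : ℝ) - 1) ^ 2) / (1 + (n : ℝ) * s) < 4 / (1 + (n : ℝ) * s) := by
  have hn2 : (2:ℝ) ≤ (n:ℝ) := by exact_mod_cast hn
  have hc : (0:ℝ) < (n : ℝ) * s := by
    have : (0:ℝ) < (n:ℝ) := by linarith
    positivity
  set c : ℝ := (n : ℝ) * s with hcdef
  have h1c : (0:ℝ) < 1 + c := by linarith
  refine ⟨?_, ?_, ?_, ?_, ?_, ?_⟩
  · intro r hr
    have hD : (0:ℝ) < 1 + r + c := by linarith
    have hderiv := (hHor_hasDerivAt n s r hD).deriv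
    rw [hderiv]
    have hkey : (4 * (2 * (1 + r) + c * (1 - (n : ℝ))) * (1 + r + c) ^ 2 -
        4 * ((1 + r) ^ 2 + c * (1 + r - (n : ℝ) * r)) * (2 * (1 + r + c)))
        / ((1 + r + c) ^ 2) ^ 2
        = 4 * c * ((1 + (n:ℝ)) * r - ((n:ℝ) - 1) * (1 + c)) / (1 + r + c) ^ 3 := by
      have h1 : (1 + r + c) ≠ 0 := ne_of_gt hD
      field_simp
      ring
    rw [hkey]
    have hne3 : (1 + r + c) ^ 3 ≠ 0 := by positivity
    rw [div_eq_zero_iff]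
    have h4c : (4 * c : ℝ) ≠ 0 := by positivity
    constructor
    · rintro (h | h)
      · have hlin : (1 + (n:ℝ)) * r - ((n:ℝ) - 1) * (1 + c) = 0 := by
          rcases mul_eq_zero.1 h with h' | h'
          · exact absurd h' h4c
          · exact h'
        have hn1 : (1 + (n:ℝ)) ≠ 0 := by linarith
        field_simp
        linarith [hlin]
      · exact absurd h hne3
    · intro h
      left
      have hn1 : (1 + (n:ℝ)) ≠ 0 := by linarith
      rw [h]
      field_simp
      ring
  · have hn1 : (1 + (n:ℝ)) ≠ 0 := by linarith
    have hr0 : (0:ℝ) ≤ ((n : ℝ) - 1) * (1 + c) / (1 + (n : ℝ)) := by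
      apply div_nonneg
      · nlinarith
      · linarith
    have hD : (1 + ((n : ℝ) - 1) * (1 + c) / (1 + (n : ℝ)) + c) ≠ 0 := by
      have : (0:ℝ) < 1 + ((n : ℝ) - 1) * (1 + c) / (1 + (n : ℝ)) + c := by linarith
      exact ne_of_gt this
    have h1c' : (1 + c) ≠ 0 := ne_of_gt h1c
    have hD2 : (1 + ((n : ℝ) - 1) * (1 + c) / (1 + (n : ℝ)) + c) ^ 2 ≠ 0 := pow_ne_zero 2 hD
    simp only [hHor]
    rw [← hcdef, div_eq_div_iff hD2 h1c', hcdef]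
    field_simp
    ring
  · simp only [hHor]
    rw [← hcdef]
    have h1c' : (1 + c) ≠ 0 := ne_of_gt h1c
    field_simp
    ring
  · -- limit at infinity
    set g : ℝ → ℝ := fun x =>
      4 * ((x + 1) ^ 2 + c * (x ^ 2 + x - (n : ℝ) * x)) / (x + 1 + c * x) ^ 2 with hg
    have hg0 : g 0 = 4 := by simp [hg]
    have hcont : ContinuousAt g 0 := by
      apply ContinuousAt.div
      · fun_prop
      · fun_prop
      · norm_num
    have htend : Filter.Tendsto (fun r : ℝ => g r⁻¹) Filter.atTop (nhds 4) := by
      rw [← hg0]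
      exact hcont.tendsto.comp tendsto_inv_atTop_zero
    apply htend.congr'
    filter_upwards [Filter.eventually_gt_atTop (0:ℝ)] with r hr
    have hrne : r ≠ 0 := ne_of_gt hr
    have hD : (1 + r + c) ≠ 0 := by positivity
    simp only [hg, hHor, ← hcdef]
    rw [div_eq_div_iff (by positivity) (by positivity)]
    field_simp
  · rw [div_lt_iff₀ h1c]
    nlinarith
  · rw [div_lt_div_iff_of_pos_right h1c]
    nlinarith
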